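/- arXiv:0707.0994 — 3 statements merged into one kernel-verified Lean document; each statement's English description precedes it below -/
import Mathlib

section
/- Suppose the topology of E is generated by an increasing sequence of seminorms (p_n)_{n∈ℕ}. Let A = [(A_ε)] and B = [(B_ε)] be internal subsets of G_E. Then A ∩ B = ⋂_{m∈ℕ} [({u∈E : d_m(u,A_ε) ≤ ε^m} ∩ {u∈E : d_m(u,B_ε) ≤ ε^m})_ε], and the right-hand side does not depend on the chosen representative nets (A_ε) of A and (B_ε) of B. -/
open Filter Topology Asymptotics

noncomputable section

namespace ColombeauPaper

variable {ι κ : Type*} {E : Type*} [AddCommGroup E] [Module ℝ E]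
  {F : Type*} [AddCommGroup F] [Module ℝ F]

/-- A net `(u_ε)` in `E` is moderate for the family of seminorms `p` if for every `i`
there is `M ∈ ℕ` with `p i (u_ε) ≤ ε ^ (-M)` for all sufficiently small `ε > 0`. -/
def IsModerate (p : ι → Seminorm ℝ E) (u : ℝ → E) : Prop :=
  ∀ i, ∃ M : ℕ, ∀ᶠ ε in 𝓝[>] (0 : ℝ), p i (u ε) ≤ ε ^ (-(M : ℤ))

/-- A net `(u_ε)` in `E` is negligible if for every `i` and every `m ∈ ℕ` one has
`p i (u_ε) ≤ ε ^ m` for all sufficiently small `ε > 0`. -/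
def IsNegligible (p : ι → Seminorm ℝ E) (u : ℝ → E) : Prop :=
  ∀ i, ∀ m : ℕ, ∀ᶠ ε in 𝓝[>] (0 : ℝ), p i (u ε) ≤ ε ^ m

/-- A negligible net of real numbers. -/
def IsNegligibleR (n : ℝ → ℝ) : Prop :=
  ∀ m : ℕ, ∀ᶠ ε in 𝓝[>] (0 : ℝ), |n ε| ≤ ε ^ m

lemma small_mem : {ε : ℝ | 0 < ε ∧ ε ≤ 1 / 2} ∈ 𝓝[>] (0 : ℝ) := by
  have h : Set.Ioo (0 : ℝ) (1 / 2) ∈ 𝓝[>] (0 : ℝ) :=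
    Ioo_mem_nhdsGT_of_mem ⟨le_refl 0, by norm_num⟩
  filter_upwards [h] with ε hε
  exact ⟨hε.1, hε.2.le⟩

lemma zpow_neg_natCast_eq {ε : ℝ} (k : ℕ) : ε ^ (-(k : ℤ)) = ε⁻¹ ^ (k : ℤ) := by
  rw [zpow_neg, inv_zpow]

/-- The moderate nets form an additive subgroup of `(0,1) → E` (here modelled on `ℝ → E`,
with all conditions holding for sufficiently small `ε > 0`). -/
def moderateGroup (p : ι → Seminorm ℝ E) : AddSubgroup (ℝ → E) where
  carrier := {u | IsModerate p u}
  zero_mem' := by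
    intro i
    refine ⟨0, ?_⟩
    filter_upwards [self_mem_nhdsWithin] with ε hε
    have hε' : (0 : ℝ) < ε := hε
    simp only [Pi.zero_apply, map_zero]
    positivity
  add_mem' := by
    intro u v hu hv i
    obtain ⟨M, hM⟩ := hu i
    obtain ⟨N, hN⟩ := hv i
    refine ⟨max M N + 1, ?_⟩
    filter_upwards [hM, hN, small_mem] with ε h1 h2 h3
    obtain ⟨hε, hε2⟩ := h3
    have hinv : (1 : ℝ) ≤ ε⁻¹ := (one_le_inv₀ hε).2 (by linarith)
    have h2inv : (2 : ℝ) ≤ ε⁻¹ := by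
      nlinarith [mul_inv_cancel₀ (ne_of_gt hε)]
    have key : ∀ k l : ℕ, k ≤ l → ε ^ (-(k : ℤ)) ≤ ε ^ (-(l : ℤ)) := by
      intro k l hkl
      rw [zpow_neg_natCast_eq, zpow_neg_natCast_eq]
      exact zpow_le_zpow_right₀ hinv (by exact_mod_cast hkl)
    set K : ℕ := max M N with hK
    have h1' : p i (u ε) ≤ ε ^ (-(K : ℤ)) := h1.trans (key M K (le_max_left _ _))
    have h2' : p i (v ε) ≤ ε ^ (-(K : ℤ)) := h2.trans (key N K (le_max_right _ _))
    have tri : p i ((u + v) ε) ≤ p i (u ε) + p i (v ε) := by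
      simpa using map_add_le_add (p i) (u ε) (v ε)
    have efin : ε ^ (-(K : ℤ)) * 2 ≤ ε ^ (-((K + 1 : ℕ) : ℤ)) := by
      rw [zpow_neg_natCast_eq, zpow_neg_natCast_eq]
      push_cast
      have hnn : (0:ℝ) ≤ ε⁻¹ ^ (K : ℤ) := by positivity
      calc ε⁻¹ ^ (K : ℤ) * 2 ≤ ε⁻¹ ^ (K : ℤ) * ε⁻¹ :=
            mul_le_mul_of_nonneg_left h2inv hnn
        _ = ε⁻¹ ^ ((K : ℤ) + 1) := by rw [zpow_add₀ (by positivity : (ε⁻¹ : ℝ) ≠ 0), zpow_one]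
    push_cast at efin ⊢
    linarith
  neg_mem' := by
    intro u hu i
    obtain ⟨M, hM⟩ := hu i
    refine ⟨M, ?_⟩
    filter_upwards [hM] with ε h
    simpa [map_neg_eq_map] using h

/-- The negligible nets form an additive subgroup of the moderate ones. -/
def negligibleGroup (p : ι → Seminorm ℝ E) : AddSubgroup (moderateGroup p) where
  carrier := {u | IsNegligible p (u : ℝ → E)}
  zero_mem' := by
    intro i m
    filter_upwards [self_mem_nhdsWithin] with ε hε
    have hε' : (0 : ℝ) < ε := hε
    simp only [AddSubgroup.coe_zero, Pi.zero_apply, map_zero]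
    positivity
  add_mem' := by
    intro u v hu hv i m
    filter_upwards [hu i (m + 1), hv i (m + 1), small_mem] with ε h1 h2 h3
    obtain ⟨hε, hε2⟩ := h3
    have tri : p i (((u + v : moderateGroup p) : ℝ → E) ε)
        ≤ p i ((u : ℝ → E) ε) + p i ((v : ℝ → E) ε) := by
      simpa using map_add_le_add (p i) ((u : ℝ → E) ε) ((v : ℝ → E) ε)
    have hpow : ε ^ (m + 1) = ε ^ m * ε := pow_succ ε m
    nlinarith [pow_nonneg hε.le m]
  neg_mem' := by
    intro u hu i m
    filter_upwards [hu i m] with ε h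
    have : ((-u : moderateGroup p) : ℝ → E) ε = -((u : ℝ → E) ε) := rfl
    rw [this, map_neg_eq_map]
    exact h

/-- The Colombeau space based on `E` (with the family of seminorms `p`):
the quotient of the moderate nets by the negligible ones. -/
abbrev Colombeau (p : ι → Seminorm ℝ E) : Type _ :=
  moderateGroup p ⧸ negligibleGroup p

/-- The internal subset of `𝒢_E` generated by a net `(A_ε)` of subsets of `E`:
all `u` having a representative `(u_ε)` with `u_ε ∈ A_ε` for sufficiently small `ε`. -/
def internalSet (p : ι → Seminorm ℝ E) (A : ℝ → Set E) : Set (Colombeau p) :=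
  {u | ∃ w : moderateGroup p, (QuotientAddGroup.mk w : Colombeau p) = u ∧
        ∀ᶠ ε in 𝓝[>] (0 : ℝ), (w : ℝ → E) ε ∈ A ε}

/-- A subset of `𝒢_E` is internal if it is generated by some net of subsets of `E`. -/
def IsInternal (p : ι → Seminorm ℝ E) (A : Set (Colombeau p)) : Prop :=
  ∃ Anet : ℝ → Set E, A = internalSet p Anet

/-- `d_i(u, A) = inf_{v ∈ A} p_i (u - v)`, with value `+∞` for `A = ∅`. -/
def semiDist (p : ι → Seminorm ℝ E) (i : ι) (u : E) (A : Set E) : EReal :=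
  ⨅ v ∈ A, ((p i (u - v) : ℝ) : EReal)

/-- A sharply bounded net of subsets of `E`. -/
def SharplyBoundedNet (p : ι → Seminorm ℝ E) (A : ℝ → Set E) : Prop :=
  ∀ i, ∃ M : ℕ, ∀ᶠ ε in 𝓝[>] (0 : ℝ), ∀ w ∈ A ε, p i w ≤ ε ^ (-(M : ℤ))

/-- `p_i(u) ≤ α ^ t` in `ℝ̃` (where `α` is the class of `(ε)_ε`): some representative of the
net of seminorms is bounded by `ε ^ t` up to a negligible net for small `ε`. -/
def seminormLeAlpha (p : ι → Seminorm ℝ E) (i : ι) (u : Colombeau p) (t : ℝ) : Prop :=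
  ∃ (w : moderateGroup p) (n : ℝ → ℝ), (QuotientAddGroup.mk w : Colombeau p) = u ∧
    IsNegligibleR n ∧ ∀ᶠ ε in 𝓝[>] (0 : ℝ), p i ((w : ℝ → E) ε) ≤ ε ^ t + n ε

/-- The ultra-pseudo-seminorm `u ↦ |p_i(u)|_s = e^{-ν(p_i(u))}` on `𝒢_E`, where
`ν(x) = sup {b : |x_ε| = O(ε^b)}` is the valuation. -/
def sharpSemi (p : ι → Seminorm ℝ E) (i : ι) (u : Colombeau p) : ℝ :=
  sInf {r : ℝ | ∃ (b : ℝ) (w : moderateGroup p), (QuotientAddGroup.mk w : Colombeau p) = u ∧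
    r = Real.exp (-b) ∧ (fun ε => (p i ((w : ℝ → E) ε) : ℝ)) =O[𝓝[>] (0 : ℝ)] fun ε => ε ^ b}

/-- The sharp topology on `𝒢_E`: the topology generated by the ultra-pseudo-seminorms
`u ↦ |p_i(u)|_s`, i.e. generated by all the corresponding balls. -/
def sharpTopology (p : ι → Seminorm ℝ E) : TopologicalSpace (Colombeau p) :=
  TopologicalSpace.generateFrom
    {B | ∃ (u : Colombeau p) (i : ι) (r : ℝ), 0 < r ∧
          B = {v | sharpSemi p i (v - u) < r}}

lemma indicator_norm_le_one (S : Set ℝ) (ε : ℝ) :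
    ‖S.indicator (fun _ => (1 : ℝ)) ε‖ ≤ 1 := by
  by_cases h : ε ∈ S <;>
    simp [Set.indicator_of_mem, Set.indicator_of_notMem, h]

lemma eAux_le (p : ι → Seminorm ℝ E) (S : Set ℝ) (i : ι) (ε : ℝ) (x : E) :
    p i (S.indicator (fun _ => (1 : ℝ)) ε • x) ≤ p i x := by
  rw [map_smul_eq_mul]
  calc ‖S.indicator (fun _ => (1 : ℝ)) ε‖ * p i x ≤ 1 * p i x :=
        mul_le_mul_of_nonneg_right (indicator_norm_le_one S ε) (apply_nonneg _ _)
    _ = p i x := one_mul _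

/-- Multiplication by the characteristic function `χ_S`, on representatives. -/
def eAux (p : ι → Seminorm ℝ E) (S : Set ℝ) : moderateGroup p →+ moderateGroup p where
  toFun u := ⟨fun ε => S.indicator (fun _ => (1 : ℝ)) ε • (u : ℝ → E) ε, by
    have hu : IsModerate p (u : ℝ → E) := u.2
    intro i
    obtain ⟨M, hM⟩ := hu i
    refine ⟨M, ?_⟩
    filter_upwards [hM] with ε hε
    exact (eAux_le p S i ε _).trans hε⟩
  map_zero' := by
    apply Subtype.ext
    funext ε
    simp
  map_add' u v := by
    apply Subtype.ext
    funext ε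
    simp [smul_add]

/-- Multiplication by `e_S`, the class of the characteristic function of `S ⊆ (0,1)`,
as a map `𝒢_E → 𝒢_E`. -/
def eMul (p : ι → Seminorm ℝ E) (S : Set ℝ) : Colombeau p →+ Colombeau p :=
  QuotientAddGroup.map _ _ (eAux p S) (by
    intro u hu
    rw [AddSubgroup.mem_comap]
    have hu' : IsNegligible p (u : ℝ → E) := hu
    show IsNegligible p _
    intro i m
    filter_upwards [hu' i m] with ε hε
    exact (eAux_le p S i ε _).trans hε)

/-- The set of finite interleavings `∑_{j=1}^m e_{S_j} a_j` of elements of `A`,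
over partitions `{S_1, …, S_m}` of `(0,1)`. -/
def interleaving (p : ι → Seminorm ℝ E) (A : Set (Colombeau p)) : Set (Colombeau p) :=
  {u | ∃ (m : ℕ) (S : Fin m → Set ℝ) (a : Fin m → Colombeau p),
        (∀ j, a j ∈ A) ∧ (∀ j, S j ⊆ Set.Ioo 0 1) ∧
        (Pairwise fun j k => Disjoint (S j) (S k)) ∧ (⋃ j, S j) = Set.Ioo 0 1 ∧
        u = ∑ j, eMul p (S j) (a j)}

/-- The family of seminorms `max (p_i, q_j)` generating the product topology on `E × F`. -/
def prodSeminorm (p : ι → Seminorm ℝ E) (q : κ → Seminorm ℝ F) :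
    ι × κ → Seminorm ℝ (E × F) :=
  fun ij => (p ij.1).comp (LinearMap.fst ℝ E F) ⊔ (q ij.2).comp (LinearMap.snd ℝ E F)

lemma prodSeminorm_apply (p : ι → Seminorm ℝ E) (q : κ → Seminorm ℝ F) (i : ι) (j : κ)
    (x : E × F) : prodSeminorm p q (i, j) x = max (p i x.1) (q j x.2) := by
  simp [prodSeminorm, Seminorm.sup_apply, Seminorm.comp_apply]

/-- First component of a moderate net in `E × F`, as a moderate net in `E`. -/
def prodFstAux [Nonempty κ] (p : ι → Seminorm ℝ E) (q : κ → Seminorm ℝ F) :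
    moderateGroup (prodSeminorm p q) →+ moderateGroup p where
  toFun w := ⟨fun ε => ((w : ℝ → E × F) ε).1, by
    have hw : IsModerate (prodSeminorm p q) (w : ℝ → E × F) := w.2
    intro i
    obtain ⟨j⟩ := ‹Nonempty κ›
    obtain ⟨M, hM⟩ := hw (i, j)
    refine ⟨M, ?_⟩
    filter_upwards [hM] with ε hε
    calc p i (((w : ℝ → E × F) ε).1) ≤ prodSeminorm p q (i, j) ((w : ℝ → E × F) ε) := by
          rw [prodSeminorm_apply]; exact le_max_left _ _
      _ ≤ ε ^ (-(M : ℤ)) := hε⟩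
  map_zero' := by apply Subtype.ext; funext ε; simp
  map_add' u v := by apply Subtype.ext; funext ε; simp

/-- Second component of a moderate net in `E × F`, as a moderate net in `F`. -/
def prodSndAux [Nonempty ι] (p : ι → Seminorm ℝ E) (q : κ → Seminorm ℝ F) :
    moderateGroup (prodSeminorm p q) →+ moderateGroup q where
  toFun w := ⟨fun ε => ((w : ℝ → E × F) ε).2, by
    have hw : IsModerate (prodSeminorm p q) (w : ℝ → E × F) := w.2
    intro j
    obtain ⟨i⟩ := ‹Nonempty ι›
    obtain ⟨M, hM⟩ := hw (i, j)
    refine ⟨M, ?_⟩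
    filter_upwards [hM] with ε hε
    calc q j (((w : ℝ → E × F) ε).2) ≤ prodSeminorm p q (i, j) ((w : ℝ → E × F) ε) := by
          rw [prodSeminorm_apply]; exact le_max_right _ _
      _ ≤ ε ^ (-(M : ℤ)) := hε⟩
  map_zero' := by apply Subtype.ext; funext ε; simp
  map_add' u v := by apply Subtype.ext; funext ε; simp

/-- The canonical identification `𝒢_{E × F} ≅ 𝒢_E × 𝒢_F` (given on representatives by
`[(u_ε, v_ε)] ↦ ([(u_ε)], [(v_ε)])`). -/
def prodIdent [Nonempty ι] [Nonempty κ] (p : ι → Seminorm ℝ E) (q : κ → Seminorm ℝ F) :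
    Colombeau (prodSeminorm p q) →+ Colombeau p × Colombeau q :=
  QuotientAddGroup.lift (negligibleGroup (prodSeminorm p q))
    (((QuotientAddGroup.mk' (negligibleGroup p)).comp (prodFstAux p q)).prod
      ((QuotientAddGroup.mk' (negligibleGroup q)).comp (prodSndAux p q)))
    (by
      intro w hw
      have hw' : IsNegligible (prodSeminorm p q) (w : ℝ → E × F) := hw
      rw [AddMonoidHom.mem_ker]
      refine Prod.ext ?_ ?_
      · show (QuotientAddGroup.mk' (negligibleGroup p)) (prodFstAux p q w) = 0
        rw [QuotientAddGroup.mk'_apply, QuotientAddGroup.eq_zero_iff]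
        show IsNegligible p _
        intro i m
        obtain ⟨j⟩ := ‹Nonempty κ›
        filter_upwards [hw' (i, j) m] with ε hε
        calc p i (((w : ℝ → E × F) ε).1)
            ≤ prodSeminorm p q (i, j) ((w : ℝ → E × F) ε) := by
              rw [prodSeminorm_apply]; exact le_max_left _ _
          _ ≤ ε ^ m := hε
      · show (QuotientAddGroup.mk' (negligibleGroup q)) (prodSndAux p q w) = 0
        rw [QuotientAddGroup.mk'_apply, QuotientAddGroup.eq_zero_iff]
        show IsNegligible q _
        intro j m
        obtain ⟨i⟩ := ‹Nonempty ι›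
        filter_upwards [hw' (i, j) m] with ε hε
        calc q j (((w : ℝ → E × F) ε).2)
            ≤ prodSeminorm p q (i, j) ((w : ℝ → E × F) ε) := by
              rw [prodSeminorm_apply]; exact le_max_right _ _
          _ ≤ ε ^ m := hε)

/-- A subset of `𝒢_E × 𝒢_F` is internal if, under the canonical identification
`𝒢_{E×F} ≅ 𝒢_E × 𝒢_F`, it corresponds to an internal subset of `𝒢_{E×F}`. -/
def IsInternalProd [Nonempty ι] [Nonempty κ] (p : ι → Seminorm ℝ E) (q : κ → Seminorm ℝ F)
    (C : Set (Colombeau p × Colombeau q)) : Prop :=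
  ∃ Cnet : ℝ → Set (E × F),
    C = prodIdent p q '' internalSet (prodSeminorm p q) Cnet

section Normed

variable (V : Type*) [NormedAddCommGroup V] [NormedSpace ℝ V]

/-- The norm of a normed space, as a one-element family of seminorms. -/
abbrev normFamily : Unit → Seminorm ℝ V := fun _ => normSeminorm ℝ V

/-- The Colombeau space based on a normed space `V`. -/
abbrev GN := Colombeau (normFamily V)

variable {V}

/-- `‖u‖ ≤ α ^ t` in `ℝ̃`, where `α` is the class of `(ε)_ε`. -/
def normLeAlpha (u : GN V) (t : ℝ) : Prop :=
  ∃ (w : moderateGroup (normFamily V)) (n : ℝ → ℝ),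
    (QuotientAddGroup.mk w : GN V) = u ∧ IsNegligibleR n ∧
    ∀ᶠ ε in 𝓝[>] (0 : ℝ), ‖(w : ℝ → V) ε‖ ≤ ε ^ t + n ε

/-- `‖u‖ ≤ ‖v‖` in `ℝ̃`. -/
def normLeNorm (u v : GN V) : Prop :=
  ∃ (a b : moderateGroup (normFamily V)) (n : ℝ → ℝ),
    (QuotientAddGroup.mk a : GN V) = u ∧ (QuotientAddGroup.mk b : GN V) = v ∧
    IsNegligibleR n ∧
    ∀ᶠ ε in 𝓝[>] (0 : ℝ), ‖(a : ℝ → V) ε‖ ≤ ‖(b : ℝ → V) ε‖ + n ε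

/-- A subset `A ⊆ 𝒢_V` is sharply bounded if `‖u‖ ≤ α^{-M}` for some `M ∈ ℕ` and all `u ∈ A`. -/
def SharplyBounded (A : Set (GN V)) : Prop :=
  ∃ M : ℕ, ∀ u ∈ A, normLeAlpha u (-(M : ℝ))

/-- A sharply bounded net of subsets of the normed space `V`. -/
def SharplyBoundedNetN (A : ℝ → Set V) : Prop :=
  ∃ M : ℕ, ∀ᶠ ε in 𝓝[>] (0 : ℝ), ∀ w ∈ A ε, ‖w‖ ≤ ε ^ (-(M : ℤ))

end Normed

/-!
An element of `A ∩ B` is represented by a net lying in `A_ε` which is negligibly far from `B_ε`,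
so it lies in every set on the right. Conversely, if `u` lies in every set on the right then, for a
fixed representative `(w_ε)` of `u` and each `m`, eventually some `a ∈ A_ε` has
`p_m(w_ε - a) ≤ 3 ε^m`. Let `N(ε)` be the largest `m ≤ 1/ε` such that this holds at `ε` for all
indices up to `m`; then `N(ε) → ∞` as `ε → 0`, and picking such an `a_ε` for `m = N(ε)` yields
a net with `w - a` negligible, because the seminorms increase. Hence `u ∈ A`, and likewise
`u ∈ B`.
-/

theorem _root_.Filter.exists_tendsto_atTop_eventually_of_forall_eventually {X : Type*}
    {l : Filter X} {f : X → ℕ} (hf : Tendsto f l atTop) {Q : ℕ → X → Prop}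
    (hQ : ∀ m, ∀ᶠ x in l, Q m x) :
    ∃ N : X → ℕ, Tendsto N l atTop ∧ ∀ᶠ x in l, Q (N x) x := by
  classical
  have hQ_le : ∀ M, ∀ᶠ x in l, ∀ j ≤ M, Q j x := fun M =>
    (eventually_all_finite (Set.finite_Iic M)).2 fun j _ => hQ j
  refine ⟨fun x => Nat.findGreatest (fun m => ∀ j ≤ m, Q j x) (f x), ?_, ?_⟩
  · refine tendsto_atTop.2 fun M => ?_
    filter_upwards [hQ_le M, hf.eventually_ge_atTop M] with x hx hfx
    exact Nat.le_findGreatest hfx hx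
  · filter_upwards [hQ_le 0] with x hx
    exact Nat.findGreatest_spec (P := fun m => ∀ j ≤ m, Q j x) (Nat.zero_le _) hx _ le_rfl

theorem mk_eq_mk_iff {p : ι → Seminorm ℝ E} {v w : moderateGroup p} :
    (QuotientAddGroup.mk v : Colombeau p) = QuotientAddGroup.mk w ↔
      IsNegligible p fun ε => (v : ℝ → E) ε - (w : ℝ → E) ε :=
  QuotientAddGroup.eq_iff_sub_mem

theorem IsNegligible.isModerate {p : ι → Seminorm ℝ E} {u : ℝ → E} (h : IsNegligible p u) :
    IsModerate p u := fun i =>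
  ⟨0, (h i 0).mono fun ε hε => by simpa using hε⟩

theorem isNegligible_of_eventually_le_mul_pow {p : ℕ → Seminorm ℝ E} (hp : Monotone p)
    {u : ℝ → E} {N : ℝ → ℕ} (hN : Tendsto N (𝓝[>] 0) atTop) (C : ℝ)
    (h : ∀ᶠ ε in 𝓝[>] 0, p (N ε) (u ε) ≤ C * ε ^ N ε) : IsNegligible p u := by
  intro i m
  have hCε_lt : ∀ᶠ ε in 𝓝[>] (0 : ℝ), C * ε < 1 := by
    have : Tendsto (fun ε : ℝ => C * ε) (𝓝[>] 0) (𝓝 0) := by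
      simpa using ((continuous_const_mul C).tendsto 0).mono_left nhdsWithin_le_nhds
    exact this.eventually (gt_mem_nhds one_pos)
  filter_upwards [h, hN.eventually_ge_atTop (max i (m + 1)), hCε_lt, small_mem]
    with ε hε hNε hCε ⟨hε_pos, hε_le⟩
  have hC : 0 ≤ C := nonneg_of_mul_nonneg_left ((apply_nonneg _ _).trans hε) (by positivity)
  calc p i (u ε) ≤ p (N ε) (u ε) := hp (le_of_max_le_left hNε) _
    _ ≤ C * ε ^ N ε := hε
    _ ≤ C * ε ^ (m + 1) := mul_le_mul_of_nonneg_left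
      (pow_le_pow_of_le_one hε_pos.le (by linarith) (le_of_max_le_right hNε)) hC
    _ = C * ε * ε ^ m := by ring
    _ ≤ ε ^ m := mul_le_of_le_one_left (by positivity) hCε.le

theorem mk_mem_internalSet_of_isNegligible_sub {p : ι → Seminorm ℝ E} {A : ℝ → Set E}
    (w : moderateGroup p) {a : ℝ → E} (ha : ∀ᶠ ε in 𝓝[>] 0, a ε ∈ A ε)
    (hwa : IsNegligible p fun ε => (w : ℝ → E) ε - a ε) :
    (QuotientAddGroup.mk w : Colombeau p) ∈ internalSet p A := by
  have hwa_mod : (w : ℝ → E) - a ∈ moderateGroup p := hwa.isModerate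
  have ha_mod : a ∈ moderateGroup p := by
    simpa using (moderateGroup p).sub_mem w.2 hwa_mod
  exact ⟨⟨a, ha_mod⟩, (mk_eq_mk_iff.2 hwa).symm, ha⟩

theorem semiDist_le_of_mem {p : ι → Seminorm ℝ E} (i : ι) {u a : E} {A : Set E} (ha : a ∈ A) :
    semiDist p i u A ≤ (p i (u - a) : EReal) :=
  iInf₂_le a ha

theorem exists_lt_of_semiDist_lt {p : ι → Seminorm ℝ E} {i : ι} {u : E} {A : Set E} {r : EReal}
    (h : semiDist p i u A < r) : ∃ a ∈ A, (p i (u - a) : EReal) < r := by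
  simpa [semiDist, iInf_lt_iff] using h

theorem eventually_semiDist_le_of_mem_internalSet {p : ι → Seminorm ℝ E} {A : ℝ → Set E}
    {w : moderateGroup p} (hw : (QuotientAddGroup.mk w : Colombeau p) ∈ internalSet p A)
    (i : ι) (m : ℕ) :
    ∀ᶠ ε in 𝓝[>] 0, semiDist p i ((w : ℝ → E) ε) (A ε) ≤ ((ε ^ m : ℝ) : EReal) := by
  obtain ⟨v, hvw, hv⟩ := hw
  filter_upwards [hv, mk_eq_mk_iff.1 hvw.symm i m] with ε hvε hwv
  exact (semiDist_le_of_mem i hvε).trans (EReal.coe_le_coe hwv)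

theorem eventually_exists_mem_seminorm_sub_le {p : ι → Seminorm ℝ E} {A : ℝ → Set E}
    {w₀ w : moderateGroup p} (hw : (QuotientAddGroup.mk w₀ : Colombeau p) = QuotientAddGroup.mk w)
    {i : ι} {m : ℕ}
    (hd : ∀ᶠ ε in 𝓝[>] 0, semiDist p i ((w : ℝ → E) ε) (A ε) ≤ ((ε ^ m : ℝ) : EReal)) :
    ∀ᶠ ε in 𝓝[>] 0, ∃ a ∈ A ε, p i ((w₀ : ℝ → E) ε - a) ≤ 3 * ε ^ m := by
  filter_upwards [hd, mk_eq_mk_iff.1 hw i m, self_mem_nhdsWithin] with ε hdε hw₀w ε_pos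
  have hε_pow : 0 < ε ^ m := pow_pos ε_pos m
  obtain ⟨a, ha, hwa⟩ := exists_lt_of_semiDist_lt
    (hdε.trans_lt (EReal.coe_lt_coe_iff.2 (by linarith : ε ^ m < 2 * ε ^ m)))
  refine ⟨a, ha, ?_⟩
  calc p i ((w₀ : ℝ → E) ε - a)
        ≤ p i ((w₀ : ℝ → E) ε - (w : ℝ → E) ε) + p i ((w : ℝ → E) ε - a) := by
        simpa using map_add_le_add (p i) ((w₀ : ℝ → E) ε - (w : ℝ → E) ε) ((w : ℝ → E) ε - a)
    _ ≤ 3 * ε ^ m := by linarith [EReal.coe_lt_coe_iff.1 hwa]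

theorem mem_internalSet_of_forall_semiDist_le {p : ℕ → Seminorm ℝ E} (hp : Monotone p)
    {A : ℝ → Set E} {u : Colombeau p}
    (h : ∀ m : ℕ, ∃ w : moderateGroup p, (QuotientAddGroup.mk w : Colombeau p) = u ∧
      ∀ᶠ ε in 𝓝[>] 0, semiDist p m ((w : ℝ → E) ε) (A ε) ≤ ((ε ^ m : ℝ) : EReal)) :
    u ∈ internalSet p A := by
  obtain ⟨w₀, rfl, -⟩ := h 0
  have hnear : ∀ m, ∀ᶠ ε in 𝓝[>] (0 : ℝ), ∃ a ∈ A ε, p m ((w₀ : ℝ → E) ε - a) ≤ 3 * ε ^ m :=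
    fun m => let ⟨_, hw, hd⟩ := h m; eventually_exists_mem_seminorm_sub_le hw.symm hd
  obtain ⟨N, hN, hnear_N⟩ := exists_tendsto_atTop_eventually_of_forall_eventually
    (tendsto_nat_floor_atTop.comp tendsto_inv_nhdsGT_zero) hnear
  obtain ⟨a, ha⟩ := hnear_N.choice
  exact mk_mem_internalSet_of_isNegligible_sub w₀ (ha.mono fun _ h => h.1)
    (isNegligible_of_eventually_le_mul_pow hp hN 3 (ha.mono fun _ h => h.2))

/-- **Intersections of internal sets.** With `(p_n)` increasing and
`A = [(A_ε)]`, `B = [(B_ε)]` internal,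
`A ∩ B = ⋂_m [({u : d_m(u, A_ε) ≤ ε^m} ∩ {u : d_m(u, B_ε) ≤ ε^m})_ε]`
(for all choices of representative nets, hence independent of them). -/
theorem intersection_characterization
    {E : Type*} [AddCommGroup E] [Module ℝ E]
    (p : ℕ → Seminorm ℝ E) (hp : Monotone p)
    (Anet Bnet : ℝ → Set E) :
    internalSet p Anet ∩ internalSet p Bnet =
      ⋂ m : ℕ, internalSet p (fun ε =>
        {u : E | semiDist p m u (Anet ε) ≤ ((ε ^ m : ℝ) : EReal)} ∩
        {u : E | semiDist p m u (Bnet ε) ≤ ((ε ^ m : ℝ) : EReal)}) := by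
  ext u
  obtain ⟨w, rfl⟩ := QuotientAddGroup.mk_surjective u
  rw [Set.mem_iInter]
  constructor
  · rintro ⟨hA, hB⟩ m
    exact ⟨w, rfl, (eventually_semiDist_le_of_mem_internalSet hA m m).and
      (eventually_semiDist_le_of_mem_internalSet hB m m)⟩
  · intro h
    exact ⟨mem_internalSet_of_forall_semiDist_le hp fun m =>
        (h m).imp fun _ hv => ⟨hv.1, hv.2.mono fun _ hε => hε.1⟩,
      mem_internalSet_of_forall_semiDist_le hp fun m =>
        (h m).imp fun _ hv => ⟨hv.1, hv.2.mono fun _ hε => hε.2⟩⟩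

end ColombeauPaper
end
end

section
/- Suppose the topology of E is generated by an increasing sequence of seminorms (p_n)_{n∈ℕ}. Let A and B be internal subsets of G_E. If A ∩ B is internal and has a sharply bounded representative net, then there exist representative nets (Ã_ε) of A and (B̃_ε) of B such that [(Ã_ε ∩ B̃_ε)] = A ∩ B. -/
/-!
If `C_ε` is eventually nonempty, take `Ã_ε = A_ε ∪ C_ε` and `B̃_ε = B_ε ∪ C_ε`; then
`C_ε ⊆ Ã_ε ∩ B̃_ε` gives `[(Ã_ε ∩ B̃_ε)] = A ∩ B`. Adjoining `C_ε` does not enlarge `A`: where a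
representative `u_ε` falls into `C_ε \ A_ε`, it is part of a selection `w` of `C`, moderate because
`C` is sharply bounded, so `[w] ∈ A ∩ B ⊆ A` and `w` is negligibly close to a net in `A_ε`, which
replaces `u_ε` there. If `C_ε` is frequently empty, `A ∩ B = [(C_ε)] = ∅` and the given nets work.
-/

open Filter Topology Asymptotics

noncomputable section

namespace ColombeauPaper

variable {ι κ : Type*} {E : Type*} [AddCommGroup E] [Module ℝ E]
  {F : Type*} [AddCommGroup F] [Module ℝ F]

lemma mk_eq_mk_iff_isNegligible {p : ι → Seminorm ℝ E} {u v : moderateGroup p} :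
    (QuotientAddGroup.mk u : Colombeau p) = QuotientAddGroup.mk v ↔
      IsNegligible p ((u : ℝ → E) - v) :=
  QuotientAddGroup.eq_iff_sub_mem

lemma IsModerate.piecewise {p : ι → Seminorm ℝ E} {u v : ℝ → E} (hu : IsModerate p u)
    (hv : IsModerate p v) (s : Set ℝ) [DecidablePred (· ∈ s)] :
    IsModerate p (s.piecewise u v) := by
  intro i
  obtain ⟨M, hM⟩ := hu i
  obtain ⟨N, hN⟩ := hv i
  refine ⟨max M N, ?_⟩
  filter_upwards [hM, hN, small_mem] with ε huε hvε ⟨hε, hε2⟩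
  have hmono : ∀ K ≤ max M N, ε ^ (-(K : ℤ)) ≤ ε ^ (-((max M N : ℕ) : ℤ)) := fun K hK =>
    zpow_le_zpow_right_of_le_one₀ hε (by linarith) (by omega)
  by_cases h : ε ∈ s
  · simpa [h] using huε.trans (hmono M (le_max_left M N))
  · simpa [h] using hvε.trans (hmono N (le_max_right M N))

lemma SharplyBoundedNet.isModerate {p : ι → Seminorm ℝ E} {C : ℝ → Set E}
    (hC : SharplyBoundedNet p C) {w : ℝ → E} (hw : ∀ᶠ ε in 𝓝[>] (0 : ℝ), w ε ∈ C ε) :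
    IsModerate p w := by
  intro i
  obtain ⟨M, hM⟩ := hC i
  exact ⟨M, by filter_upwards [hM, hw] with ε hε hwε using hε _ hwε⟩

lemma SharplyBoundedNet.exists_selection {p : ι → Seminorm ℝ E} {C : ℝ → Set E}
    (hC : SharplyBoundedNet p C) (hne : ∀ᶠ ε in 𝓝[>] (0 : ℝ), (C ε).Nonempty) (u : ℝ → E) :
    ∃ w : moderateGroup p, (∀ᶠ ε in 𝓝[>] (0 : ℝ), (w : ℝ → E) ε ∈ C ε) ∧
      ∀ ε, u ε ∈ C ε → (w : ℝ → E) ε = u ε := by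
  classical
  let w := {ε | u ε ∈ C ε}.piecewise u fun ε => Classical.epsilon (· ∈ C ε)
  have hwC : ∀ᶠ ε in 𝓝[>] (0 : ℝ), w ε ∈ C ε := by
    filter_upwards [hne] with ε ⟨x, hx⟩
    by_cases h : u ε ∈ C ε
    · simp [w, h]
    · simpa [w, h] using Classical.epsilon_spec ⟨x, hx⟩
  exact ⟨⟨w, hC.isModerate hwC⟩, hwC, fun ε h => by simp [w, h]⟩

lemma internalSet_mono (p : ι → Seminorm ℝ E) {A B : ℝ → Set E} (h : ∀ ε, A ε ⊆ B ε) :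
    internalSet p A ⊆ internalSet p B := by
  rintro u ⟨w, hw, hev⟩
  exact ⟨w, hw, hev.mono fun ε hε => h ε hε⟩

lemma internalSet_inter_subset (p : ι → Seminorm ℝ E) (A B : ℝ → Set E) :
    internalSet p (fun ε => A ε ∩ B ε) ⊆ internalSet p A ∩ internalSet p B :=
  fun _ hu => ⟨internalSet_mono p (fun _ => Set.inter_subset_left) hu,
    internalSet_mono p (fun _ => Set.inter_subset_right) hu⟩

lemma eventually_nonempty_of_mem_internalSet {p : ι → Seminorm ℝ E} {A : ℝ → Set E}
    {u : Colombeau p} (hu : u ∈ internalSet p A) : ∀ᶠ ε in 𝓝[>] (0 : ℝ), (A ε).Nonempty := by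
  obtain ⟨w, -, hw⟩ := hu
  exact hw.mono fun ε hε => ⟨_, hε⟩

lemma internalSet_union_eq {p : ι → Seminorm ℝ E} {A C : ℝ → Set E}
    (hC : SharplyBoundedNet p C) (hne : ∀ᶠ ε in 𝓝[>] (0 : ℝ), (C ε).Nonempty)
    (hCA : internalSet p C ⊆ internalSet p A) :
    internalSet p (fun ε => A ε ∪ C ε) = internalSet p A := by
  classical
  refine subset_antisymm ?_ (internalSet_mono p fun _ => Set.subset_union_left)
  rintro _ ⟨u, rfl, hu⟩
  obtain ⟨w, hwC, hwu⟩ := hC.exists_selection hne u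
  obtain ⟨a, haw, ha⟩ := hCA ⟨w, rfl, hwC⟩
  have haw' := mk_eq_mk_iff_isNegligible.1 haw
  -- keep `u` where it lies in `A`; elsewhere it lies in `C`, so `u = w ≈ a` there
  let S := {ε | (u : ℝ → E) ε ∈ A ε}
  let v : moderateGroup p := ⟨S.piecewise u a, u.2.piecewise a.2 S⟩
  refine ⟨v, mk_eq_mk_iff_isNegligible.2 fun i m => ?_, ?_⟩
  · filter_upwards [hu, haw' i m, self_mem_nhdsWithin] with ε huε hε hpos
    by_cases h : (u : ℝ → E) ε ∈ A ε
    · simpa [v, S, h] using pow_nonneg (le_of_lt hpos) m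
    · rw [Pi.sub_apply, hwu ε (huε.resolve_left h)] at hε
      simpa [v, S, h] using hε
  · filter_upwards [ha] with ε haε
    by_cases h : (u : ℝ → E) ε ∈ A ε
    · simp [v, S, h]
    · simpa [v, S, h] using haε

theorem intersection_representatives_general
    {E : Type*} [AddCommGroup E] [Module ℝ E]
    (p : ℕ → Seminorm ℝ E)
    (A B : Set (Colombeau p)) (hA : IsInternal p A) (hB : IsInternal p B)
    (hbdd : ∃ Cnet : ℝ → Set E, SharplyBoundedNet p Cnet ∧ A ∩ B = internalSet p Cnet) :
    ∃ Anet Bnet : ℝ → Set E, A = internalSet p Anet ∧ B = internalSet p Bnet ∧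
      internalSet p (fun ε => Anet ε ∩ Bnet ε) = A ∩ B := by
  obtain ⟨C, hC, hABC⟩ := hbdd
  obtain ⟨A, rfl⟩ := hA
  obtain ⟨B, rfl⟩ := hB
  by_cases hne : ∀ᶠ ε in 𝓝[>] (0 : ℝ), (C ε).Nonempty
  · have hA' := internalSet_union_eq hC hne (hABC ▸ Set.inter_subset_left)
    have hB' := internalSet_union_eq hC hne (hABC ▸ Set.inter_subset_right)
    refine ⟨fun ε => A ε ∪ C ε, fun ε => B ε ∪ C ε, hA'.symm, hB'.symm, ?_⟩
    refine subset_antisymm (hA' ▸ hB' ▸ internalSet_inter_subset p _ _) ?_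
    exact hABC ▸ internalSet_mono p fun _ =>
      Set.subset_inter Set.subset_union_right Set.subset_union_right
  · have hempty : internalSet p C = ∅ :=
      Set.eq_empty_of_forall_notMem fun _ hu => hne (eventually_nonempty_of_mem_internalSet hu)
    refine ⟨A, B, rfl, rfl, subset_antisymm (internalSet_inter_subset p A B) ?_⟩
    exact hABC ▸ hempty ▸ Set.empty_subset _

/-- With `(p_n)` increasing and `A`, `B` internal: if `A ∩ B` is internal
with a sharply bounded representative net, then there are representative nets `(Ã_ε)` of `A`
and `(B̃_ε)` of `B` with `[(Ã_ε ∩ B̃_ε)] = A ∩ B`. -/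
theorem intersection_representatives
    {E : Type*} [AddCommGroup E] [Module ℝ E]
    (p : ℕ → Seminorm ℝ E) (hp : Monotone p)
    (A B : Set (Colombeau p)) (hA : IsInternal p A) (hB : IsInternal p B)
    (hbdd : ∃ Cnet : ℝ → Set E, SharplyBoundedNet p Cnet ∧ A ∩ B = internalSet p Cnet) :
    ∃ Anet Bnet : ℝ → Set E, A = internalSet p Anet ∧ B = internalSet p Bnet ∧
      internalSet p (fun ε => Anet ε ∩ Bnet ε) = A ∩ B :=
  intersection_representatives_general p A B hA hB hbdd

end ColombeauPaper
end
end

section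
/- Let Ω ⊆ ℝ^d be open and f ∈ G(Ω). Then for each internal subset A of R̃^d with A ⊆ Ω̃_c, the induced pointwise map f : A → C̃, x ↦ f(x), is internal, i.e., its graph {(x, f(x)) : x ∈ A} is an internal subset of R̃^{d+2} (identifying C̃ with R̃^2). -/
open Filter Topology Asymptotics

noncomputable section

namespace ColombeauPaper

variable {ι κ : Type*} {E : Type*} [AddCommGroup E] [Module ℝ E]
  {F : Type*} [AddCommGroup F] [Module ℝ F]

/-- `ℝ^d` with the Euclidean norm. -/
abbrev ESp (d : ℕ) := EuclideanSpace ℝ (Fin d)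

/-- A net `(f_ε)` of smooth functions on the open set `Ω ⊆ ℝ^d` which is moderate for the
seminorms `p_n(f) = sup_{|β| ≤ n, x ∈ K} |∂^β f(x)|`, `K ⊂ Ω` compact: a representative of
an element of the Colombeau algebra `𝒢(Ω)`. -/
def GOmegaModerate {d : ℕ} (Omega : Set (ESp d)) (f : ℝ → ESp d → ℂ) : Prop :=
  (∀ ε, ContDiffOn ℝ (⊤ : ℕ∞) (f ε) Omega) ∧
  ∀ K : Set (ESp d), IsCompact K → K ⊆ Omega → ∀ j : ℕ, ∃ M : ℕ,
    ∀ᶠ ε in 𝓝[>] (0 : ℝ), ∀ x ∈ K, ‖iteratedFDerivWithin ℝ j (f ε) Omega x‖ ≤ ε ^ (-(M : ℤ))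

/-- `y = f(x)` for the pointwise map induced by `f ∈ 𝒢(Ω)` on compactly supported
generalized points: on representatives, `f(x) = [(f_ε(x_ε))]`. -/
def pointValue {d : ℕ} (f : ℝ → ESp d → ℂ) (x : GN (ESp d)) (y : GN ℂ) : Prop :=
  ∃ w : moderateGroup (normFamily (ESp d)), (QuotientAddGroup.mk w : GN (ESp d)) = x ∧
    ∃ v : moderateGroup (normFamily ℂ), (QuotientAddGroup.mk v : GN ℂ) = y ∧
      ∀ᶠ ε in 𝓝[>] (0 : ℝ), (v : ℝ → ℂ) ε = f ε ((w : ℝ → ESp d) ε)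

lemma isModerate_prodSeminorm {p : ι → Seminorm ℝ E} {q : κ → Seminorm ℝ F} {u : ℝ → E}
    {v : ℝ → F} (hu : IsModerate p u) (hv : IsModerate q v) :
    IsModerate (prodSeminorm p q) fun ε => (u ε, v ε) := by
  rintro ⟨i, j⟩
  obtain ⟨M, hM⟩ := hu i
  obtain ⟨N, hN⟩ := hv j
  refine ⟨max M N, ?_⟩
  filter_upwards [hM, hN, Ioo_mem_nhdsGT one_pos] with ε hMε hNε ⟨hε₀, hε₁⟩
  have mono : ∀ k ≤ max M N, ε ^ (-(k : ℤ)) ≤ ε ^ (-((max M N : ℕ) : ℤ)) := fun k hk =>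
    zpow_le_zpow_right_of_le_one₀ hε₀ hε₁.le (by omega)
  rw [prodSeminorm_apply]
  exact max_le (hMε.trans (mono M (le_max_left M N))) (hNε.trans (mono N (le_max_right M N)))

def moderatePair (p : ι → Seminorm ℝ E) (q : κ → Seminorm ℝ F) (u : moderateGroup p)
    (v : moderateGroup q) : moderateGroup (prodSeminorm p q) :=
  ⟨fun ε => ((u : ℝ → E) ε, (v : ℝ → F) ε), isModerate_prodSeminorm u.2 v.2⟩

lemma prodIdent_mk_moderatePair [Nonempty ι] [Nonempty κ] (p : ι → Seminorm ℝ E)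
    (q : κ → Seminorm ℝ F) (u : moderateGroup p) (v : moderateGroup q) :
    prodIdent p q (QuotientAddGroup.mk (moderatePair p q u v)) =
      (QuotientAddGroup.mk u, QuotientAddGroup.mk v) :=
  rfl

lemma mk_eq_mk_iff_norm_sub {V : Type*} [NormedAddCommGroup V] [NormedSpace ℝ V]
    {a b : moderateGroup (normFamily V)} :
    (QuotientAddGroup.mk a : GN V) = QuotientAddGroup.mk b ↔
      ∀ m : ℕ, ∀ᶠ ε in 𝓝[>] (0 : ℝ), ‖(a : ℝ → V) ε - (b : ℝ → V) ε‖ ≤ ε ^ m := by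
  have norm_eq : ∀ ε, normFamily V () (((-a + b : moderateGroup _) : ℝ → V) ε) =
      ‖(a : ℝ → V) ε - (b : ℝ → V) ε‖ := fun ε => by
    change ‖-(a : ℝ → V) ε + (b : ℝ → V) ε‖ = _
    rw [neg_add_eq_sub, norm_sub_rev]
  rw [QuotientAddGroup.eq]
  change (∀ _ : Unit, ∀ m : ℕ, ∀ᶠ ε in 𝓝[>] (0 : ℝ), _ ≤ _) ↔ _
  simp only [norm_eq]
  exact ⟨fun h => h (), fun h _ => h⟩

lemma eventually_mem_closedBall_of_negligible {V : Type*} [NormedAddCommGroup V]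
    {a b : ℝ → V} (hab : ∀ m : ℕ, ∀ᶠ ε in 𝓝[>] (0 : ℝ), ‖a ε - b ε‖ ≤ ε ^ m) {r : ℝ}
    (hr : 0 < r) : ∀ᶠ ε in 𝓝[>] (0 : ℝ), a ε ∈ Metric.closedBall (b ε) r := by
  filter_upwards [hab 1, Ioo_mem_nhdsGT hr] with ε hε hεr
  rw [Metric.mem_closedBall, dist_eq_norm]
  exact hε.trans (by simpa using hεr.2.le)

lemma negligible_sub_of_lipschitz {V W : Type*} [NormedAddCommGroup V] [NormedAddCommGroup W]
    {g : ℝ → V → W} {s : ℝ → Set V} {M : ℕ}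
    (hg : ∀ᶠ ε in 𝓝[>] (0 : ℝ), ∀ x ∈ s ε, ∀ y ∈ s ε,
      ‖g ε x - g ε y‖ ≤ ε ^ (-(M : ℤ)) * ‖x - y‖)
    {a b : ℝ → V} (ha : ∀ᶠ ε in 𝓝[>] (0 : ℝ), a ε ∈ s ε) (hb : ∀ᶠ ε in 𝓝[>] (0 : ℝ), b ε ∈ s ε)
    (hab : ∀ m : ℕ, ∀ᶠ ε in 𝓝[>] (0 : ℝ), ‖a ε - b ε‖ ≤ ε ^ m) (m : ℕ) :
    ∀ᶠ ε in 𝓝[>] (0 : ℝ), ‖g ε (a ε) - g ε (b ε)‖ ≤ ε ^ m := by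
  filter_upwards [hg, ha, hb, hab (m + M), self_mem_nhdsWithin] with ε hgε haε hbε habε hε
  have hε₀ : (0 : ℝ) < ε := hε
  calc ‖g ε (a ε) - g ε (b ε)‖ ≤ ε ^ (-(M : ℤ)) * ‖a ε - b ε‖ := hgε _ haε _ hbε
    _ ≤ ε ^ (-(M : ℤ)) * ε ^ (m + M) := by gcongr
    _ = ε ^ m := by rw [zpow_neg, zpow_natCast, pow_add]; field_simp

lemma GOmegaModerate.isModerate_comp {d : ℕ} {Omega : Set (ESp d)} {f : ℝ → ESp d → ℂ}
    (hf : GOmegaModerate Omega f) {L : Set (ESp d)} (hL : IsCompact L) (hLO : L ⊆ Omega)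
    {w : ℝ → ESp d} (hw : ∀ᶠ ε in 𝓝[>] (0 : ℝ), w ε ∈ L) :
    IsModerate (normFamily ℂ) fun ε => f ε (w ε) := by
  obtain ⟨M, hM⟩ := hf.2 L hL hLO 0
  refine fun _ => ⟨M, ?_⟩
  filter_upwards [hM, hw] with ε hMε hwε
  simpa using hMε _ hwε

lemma GOmegaModerate.exists_lipschitz_bound {d : ℕ} {Omega : Set (ESp d)}
    (hOmega : IsOpen Omega) {f : ℝ → ESp d → ℂ} (hf : GOmegaModerate Omega f)
    {L : Set (ESp d)} (hL : IsCompact L) (hLO : L ⊆ Omega) :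
    ∃ M : ℕ, ∀ᶠ ε in 𝓝[>] (0 : ℝ), ∀ s ⊆ L, Convex ℝ s → ∀ x ∈ s, ∀ y ∈ s,
      ‖f ε x - f ε y‖ ≤ ε ^ (-(M : ℤ)) * ‖x - y‖ := by
  obtain ⟨M, hM⟩ := hf.2 L hL hLO 1
  refine ⟨M, ?_⟩
  filter_upwards [hM] with ε hMε s hsL hs x hx y hy
  refine hs.norm_image_sub_le_of_norm_fderiv_le (𝕜 := ℝ) (fun z hz => ?_) (fun z hz => ?_) hy hx
  · exact ((hf.1 ε).contDiffAt (hOmega.mem_nhds (hLO (hsL hz)))).differentiableAt (by simp)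
  · rw [← norm_iteratedFDeriv_one, ← iteratedFDerivWithin_of_isOpen 1 hOmega (hLO (hsL hz))]
    exact hMε z (hsL hz)

def graphNet {d : ℕ} (f : ℝ → ESp d → ℂ) (A : ℝ → Set (ESp d)) (ε : ℝ) : Set (ESp d × ℂ) :=
  (fun x => (x, f ε x)) '' A ε

lemma mem_graphNet {d : ℕ} {f : ℝ → ESp d → ℂ} {A : ℝ → Set (ESp d)} {ε : ℝ}
    {z : ESp d × ℂ} : z ∈ graphNet f A ε ↔ z.1 ∈ A ε ∧ z.2 = f ε z.1 := by
  constructor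
  · rintro ⟨x, hx, rfl⟩
    exact ⟨hx, rfl⟩
  · rintro ⟨hz, hz₂⟩
    exact ⟨z.1, hz, Prod.ext rfl hz₂.symm⟩

/-- The representative `w₀` staying in `K` gives balls `closedBall (w₀ ε) r ⊆ cthickening r K ⊆ Ω`
that eventually contain every representative of `x`, and on which the `f ε` are moderate and
`ε ^ (-M)`-Lipschitz: so `(w_ε, f_ε w_ε)` is moderate and represents `(x, f x)`. -/
lemma mk_mem_image_internalSet_graphNet {d : ℕ} {Omega : Set (ESp d)} (hOmega : IsOpen Omega)
    {f : ℝ → ESp d → ℂ} (hf : GOmegaModerate Omega f) {Anet : ℝ → Set (ESp d)}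
    {w : moderateGroup (normFamily (ESp d))}
    (hwA : ∀ᶠ ε in 𝓝[>] (0 : ℝ), (w : ℝ → ESp d) ε ∈ Anet ε)
    {K : Set (ESp d)} (hK : IsCompact K) (hKO : K ⊆ Omega) {w₀ : moderateGroup (normFamily (ESp d))}
    (hw₀ : (QuotientAddGroup.mk w₀ : GN (ESp d)) = QuotientAddGroup.mk w)
    (hw₀K : ∀ᶠ ε in 𝓝[>] (0 : ℝ), (w₀ : ℝ → ESp d) ε ∈ K) {y : GN ℂ}
    (hy : pointValue f (QuotientAddGroup.mk w) y) :
    (QuotientAddGroup.mk w, y) ∈ prodIdent (normFamily (ESp d)) (normFamily ℂ) ''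
      internalSet (prodSeminorm (normFamily (ESp d)) (normFamily ℂ)) (graphNet f Anet) := by
  obtain ⟨w', hw', v, rfl, hv⟩ := hy
  obtain ⟨r, hr, hrO⟩ := hK.exists_cthickening_subset_open hOmega hKO
  have near : ∀ {a : moderateGroup (normFamily (ESp d))},
      (QuotientAddGroup.mk a : GN (ESp d)) = QuotientAddGroup.mk w₀ →
        ∀ᶠ ε in 𝓝[>] (0 : ℝ), (a : ℝ → ESp d) ε ∈ Metric.closedBall ((w₀ : ℝ → ESp d) ε) r :=
    fun h => eventually_mem_closedBall_of_negligible (mk_eq_mk_iff_norm_sub.1 h) hr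
  have ball_sub : ∀ᶠ ε in 𝓝[>] (0 : ℝ),
      Metric.closedBall ((w₀ : ℝ → ESp d) ε) r ⊆ Metric.cthickening r K :=
    hw₀K.mono fun _ h => Metric.closedBall_subset_cthickening h r
  have hw_near := near hw₀.symm
  let fw : moderateGroup (normFamily ℂ) :=
    ⟨fun ε => f ε ((w : ℝ → ESp d) ε), hf.isModerate_comp hK.cthickening hrO
      (by filter_upwards [hw_near, ball_sub] with ε h hsub using hsub h)⟩
  obtain ⟨M, hM⟩ := hf.exists_lipschitz_bound hOmega hK.cthickening hrO
  have lipschitz : ∀ᶠ ε in 𝓝[>] (0 : ℝ), ∀ x ∈ Metric.closedBall ((w₀ : ℝ → ESp d) ε) r,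
      ∀ x' ∈ Metric.closedBall ((w₀ : ℝ → ESp d) ε) r,
        ‖f ε x - f ε x'‖ ≤ ε ^ (-(M : ℤ)) * ‖x - x'‖ := by
    filter_upwards [hM, ball_sub] with ε hMε hsub using hMε _ hsub (convex_closedBall _ _)
  refine ⟨QuotientAddGroup.mk (moderatePair _ _ w fw),
    ⟨_, rfl, hwA.mono fun _ h => ⟨_, h, rfl⟩⟩, ?_⟩
  rw [prodIdent_mk_moderatePair]
  refine Prod.ext rfl (mk_eq_mk_iff_norm_sub.2 fun m => ?_)
  filter_upwards [negligible_sub_of_lipschitz lipschitz hw_near (near (hw'.trans hw₀.symm))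
    (mk_eq_mk_iff_norm_sub.1 hw'.symm) m, hv] with ε h hvε
  rwa [hvε]

/-- For `f ∈ 𝒢(Ω)` and an internal subset `A ⊆ Ω̃_c` of `ℝ̃^d`
(all points of `A` are compactly supported in `Ω`), the induced pointwise map
`f : A → ℂ̃` is internal, i.e. its graph `{(x, f(x)) : x ∈ A}` is an internal subset of
`ℝ̃^d × ℂ̃` (`≅ ℝ̃^{d+2}`). -/
theorem pointwise_map_internal {d : ℕ} (Omega : Set (ESp d)) (hOmega : IsOpen Omega)
    (f : ℝ → ESp d → ℂ) (hf : GOmegaModerate Omega f)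
    (Anet : ℝ → Set (ESp d))
    (hAc : ∀ x ∈ internalSet (normFamily (ESp d)) Anet,
      ∃ K : Set (ESp d), IsCompact K ∧ K ⊆ Omega ∧
        ∃ w : moderateGroup (normFamily (ESp d)),
          (QuotientAddGroup.mk w : GN (ESp d)) = x ∧
          ∀ᶠ ε in 𝓝[>] (0 : ℝ), (w : ℝ → ESp d) ε ∈ K) :
    IsInternalProd (normFamily (ESp d)) (normFamily ℂ)
      {z : GN (ESp d) × GN ℂ |
        z.1 ∈ internalSet (normFamily (ESp d)) Anet ∧ pointValue f z.1 z.2} := by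
  refine ⟨graphNet f Anet, Set.ext fun ⟨x, y⟩ => ⟨fun ⟨hx, hy⟩ => ?_, ?_⟩⟩
  · obtain ⟨w, rfl, hwA⟩ := hx
    obtain ⟨K, hK, hKO, w₀, hw₀, hw₀K⟩ := hAc _ ⟨w, rfl, hwA⟩
    exact mk_mem_image_internalSet_graphNet hOmega hf hwA hK hKO hw₀ hw₀K hy
  · rintro ⟨_, ⟨u, rfl, hu⟩, hxy⟩
    rw [← hxy]
    have hu' := hu.mono fun _ h => mem_graphNet.1 h
    exact ⟨⟨_, rfl, hu'.mono fun _ h => h.1⟩, _, rfl, _, rfl, hu'.mono fun _ h => h.2⟩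

end ColombeauPaper
end
end
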